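/- Suppose the set of saddle points X* x P* is nonempty, the infinite sequences generated by the inexact augmented Lagrangian method are well-defined, the error bound assumption holds with constants kappa > 0 and epsilon > 0, and liminf_{k -> infinity} c_k > 2 kappa (sigma + sqrt(sigma)). Then there exists a positive integer k1 such that for all k >= k1, dist(p^k, P*) <= rho_k * dist(p^{k-1}, P*), where rho_k = kappa sqrt(1 + sigma) / sqrt(c_k^2 - 2 kappa (sigma + sqrt(sigma)) c_k + kappa^2 (1 + sigma)). -/

import Mathlib

/-!
Each step of the method yields an element `(y^k, u^k)` of the saddle subdifferential of the
Lagrangian at `(x^k, p^k)`, where `u^k = (p^{k-1} - p^k) / c_k` and `‖y^k‖² ≤ σ ‖u^k‖²` by the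
relative error criterion. Pairing this with a saddle point makes `(w^k, p^k)` Fejér monotone, so
`u^k → 0` and the error bound eventually applies: both `dist(x^k, X*)` and `dist(p^k, P*)` are at
most `κ √(1+σ) ‖u^k‖`. Expanding
`‖p^{k-1} - p̄‖² = ‖p^k - p̄‖² + 2 c_k ⟪p^k - p̄, u^k⟫ + c_k² ‖u^k‖²`
and bounding `-⟪p^k - p̄, u^k⟫ ≤ ⟪x^k - x̂, y^k⟫` by monotonicity gives
`dist(p^k, P*)² + (c_k² - 2 κ (σ + √σ) c_k) ‖u^k‖² ≤ dist(p^{k-1}, P*)²`; eliminating `‖u^k‖`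
between the two estimates yields the rate.
-/

open scoped RealInnerProductSpace
open Filter

noncomputable section

/-- `Evec m` is `ℝ^m` with the Euclidean norm. -/
abbrev Evec (m : ℕ) := EuclideanSpace ℝ (Fin m)

/-- View a plain function `Fin m → ℝ` as a Euclidean vector. -/
def toE {m : ℕ} (v : Fin m → ℝ) : Evec m := WithLp.toLp 2 v

/-- The dual space `ℝ^{m1} × ℝ^{m2}` with the Euclidean (ℓ²) product norm. -/
abbrev DualPair (m1 m2 : ℕ) := WithLp 2 (Evec m1 × Evec m2)

def mkDual {m1 m2 : ℕ} (lam : Evec m1) (mu : Evec m2) : DualPair m1 m2 := WithLp.toLp 2 (lam, mu)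

/-- The primal-dual space `X × ℝ^{m1+m2}` with the Euclidean (ℓ²) product norm. -/
abbrev Triple (X : Type*) [NormedAddCommGroup X] (m1 m2 : ℕ) :=
  WithLp 2 (X × DualPair m1 m2)

def asT {X : Type*} [NormedAddCommGroup X] {m1 m2 : ℕ}
    (q : X × DualPair m1 m2) : Triple X m1 m2 := WithLp.toLp 2 q

variable {X : Type*} [NormedAddCommGroup X] [InnerProductSpace ℝ X] [FiniteDimensional ℝ X]
variable {m1 m2 : ℕ}

/-- The Lagrangian `L(x, λ, μ) = f(x) + ⟨λ, h(x)⟩ + ⟨μ, g(x)⟩`. -/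
def Lag (f : X → ℝ) (h : X → Evec m1) (g : X → Evec m2)
    (x : X) (lam : Evec m1) (mu : Evec m2) : ℝ :=
  f x + ⟪lam, h x⟫ + ⟪mu, g x⟫

/-- `(y, u, v) ∈ ∂L(x, λ, μ)`: the saddle subdifferential of the Lagrangian (for `μ ≥ 0`). -/
def saddleSubdiff (f : X → ℝ) (h : X → Evec m1) (g : X → Evec m2)
    (x : X) (lam : Evec m1) (mu : Evec m2) (y : X) (u : Evec m1) (v : Evec m2) : Prop :=
  (∀ x' : X, Lag f h g x lam mu + ⟪y, x' - x⟫ ≤ Lag f h g x' lam mu) ∧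
  (∀ (lam' : Evec m1) (mu' : Evec m2), (∀ i, 0 ≤ mu' i) →
    Lag f h g x lam' mu' ≤ Lag f h g x lam mu - ⟪u, lam' - lam⟫ - ⟪v, mu' - mu⟫)

/-- The set of saddle points of the Lagrangian: points `(x, (λ, μ))` with `μ ≥ 0`
and `(0,0,0) ∈ ∂L(x, λ, μ)`. -/
def SaddlePoints (f : X → ℝ) (h : X → Evec m1) (g : X → Evec m2) :
    Set (X × DualPair m1 m2) :=
  {s | ∃ (x : X) (lam : Evec m1) (mu : Evec m2), s = (x, mkDual lam mu) ∧
    (∀ i, 0 ≤ mu i) ∧ saddleSubdiff f h g x lam mu 0 0 0}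

/-- `X*`: the solution set of the primal problem (P). -/
def PrimalOpt (f : X → ℝ) (h : X → Evec m1) (g : X → Evec m2) : Set X :=
  {x | h x = 0 ∧ (∀ i, g x i ≤ 0) ∧
    ∀ x' : X, h x' = 0 → (∀ i, g x' i ≤ 0) → f x ≤ f x'}

/-- The dual objective function `d(λ, μ) = inf_x L(x, λ, μ)`, valued in `EReal`. -/
def dualFun (f : X → ℝ) (h : X → Evec m1) (g : X → Evec m2)
    (lam : Evec m1) (mu : Evec m2) : EReal :=
  ⨅ x : X, ((Lag f h g x lam mu : ℝ) : EReal)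

/-- `P*`: the solution set of the dual problem (D). -/
def DualOpt (f : X → ℝ) (h : X → Evec m1) (g : X → Evec m2) : Set (DualPair m1 m2) :=
  {p | ∃ (lam : Evec m1) (mu : Evec m2), p = mkDual lam mu ∧ (∀ i, 0 ≤ mu i) ∧
    ∀ (lam' : Evec m1) (mu' : Evec m2), (∀ i, 0 ≤ mu' i) →
      dualFun f h g lam' mu' ≤ dualFun f h g lam mu}

/-- The augmented Lagrangian with penalty parameter `c`. -/
def AugLag (f : X → ℝ) (h : X → Evec m1) (g : X → Evec m2) (c : ℝ)
    (x : X) (lam : Evec m1) (mu : Evec m2) : ℝ :=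
  f x + ⟪lam, h x⟫ + (c / 2) * ‖h x‖ ^ 2 +
    (1 / (2 * c)) * (‖toE (fun i => max 0 (mu i + c * g x i))‖ ^ 2 - ‖mu‖ ^ 2)

/-- The inexact augmented Lagrangian method of Eckstein and Silva, with relative error
tolerance `σ ∈ [0,1)` and penalty parameters `c k` with `inf_k c k > 0`. -/
structure ALMSeq (f : X → ℝ) (h : X → Evec m1) (g : X → Evec m2)
    (σ : ℝ) (c : ℕ → ℝ) (x y w : ℕ → X)
    (lam : ℕ → Evec m1) (mu : ℕ → Evec m2) : Prop where
  sigma_nonneg : 0 ≤ σ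
  sigma_lt_one : σ < 1
  c_pos : ∀ k, 0 < c k
  c_inf : ∃ cmin > 0, ∀ k, cmin ≤ c k
  mu0_nonneg : ∀ i, 0 ≤ mu 0 i
  /-- `y k` is a subgradient at `x k` of `x ↦ L_{c_k}(x, λ^{k-1}, μ^{k-1})`. -/
  subgrad : ∀ k, 1 ≤ k → ∀ x' : X,
    AugLag f h g (c k) (x k) (lam (k - 1)) (mu (k - 1)) + ⟪y k, x' - x k⟫ ≤
      AugLag f h g (c k) x' (lam (k - 1)) (mu (k - 1))
  /-- The relative error criterion. -/
  err : ∀ k, 1 ≤ k →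
    (2 / c k) * |⟪w (k - 1) - x k, y k⟫| + ‖y k‖ ^ 2 ≤
      σ * (‖h (x k)‖ ^ 2 +
        ‖toE (fun i => min (mu (k - 1) i / c k) (-(g (x k) i)))‖ ^ 2)
  lam_update : ∀ k, 1 ≤ k → lam k = lam (k - 1) + c k • h (x k)
  mu_update : ∀ k, 1 ≤ k → mu k = toE (fun i => max 0 (mu (k - 1) i + c k * g (x k) i))
  w_update : ∀ k, 1 ≤ k → w k = w (k - 1) - c k • y k

open Metric Set Topology

theorem sq_max_zero_sub_le (a b : ℝ) :
    max 0 b ^ 2 - max 0 a ^ 2 - 2 * max 0 a * (b - a) ≤ (b - a) ^ 2 := by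
  rcases le_total 0 a with ha | ha <;> rcases le_total 0 b with hb | hb <;>
    simp only [max_eq_left, max_eq_right, ha, hb] <;> nlinarith

theorem max_zero_add_mul_min_div {c : ℝ} (hc : 0 < c) (m s : ℝ) :
    max 0 (m + c * s) + c * min (m / c) (-s) = m := by
  rcases le_total (m + c * s) 0 with hms | hms
  · rw [max_eq_left hms, min_eq_left (by rw [div_le_iff₀ hc]; linarith)]
    field_simp
    ring
  · rw [max_eq_right hms, min_eq_right (by rw [le_div_iff₀ hc]; linarith)]
    ring

theorem sub_max_mul_add_min_nonpos {c ν : ℝ} (hc : 0 < c) (hν : 0 ≤ ν) (m s : ℝ) :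
    (ν - max 0 (m + c * s)) * (s + min (m / c) (-s)) ≤ 0 := by
  rcases le_total (m + c * s) 0 with hms | hms
  · have : m / c ≤ -s := by rw [div_le_iff₀ hc]; linarith
    rw [max_eq_left hms, min_eq_left this, sub_zero]
    exact mul_nonpos_of_nonneg_of_nonpos hν (by linarith)
  · rw [min_eq_right (by rw [le_div_iff₀ hc]; linarith)]
    simp

theorem sqrt_mul_sqrt_one_add_le {σ : ℝ} (hσ : 0 ≤ σ) : √σ * √(1 + σ) ≤ σ + √σ := by
  rw [← Real.sqrt_mul hσ, Real.sqrt_le_iff]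
  refine ⟨by positivity, ?_⟩
  nlinarith [Real.sq_sqrt hσ, Real.sqrt_nonneg σ]

theorem le_sqrt_mul_of_sq_le_mul_sq {a t σ : ℝ} (ha : 0 ≤ a) (ht : 0 ≤ t) (h : a ^ 2 ≤ σ * t ^ 2) :
    a ≤ √σ * t := by
  rcases le_total σ 0 with hσ | hσ
  · rw [Real.sqrt_eq_zero'.2 hσ, zero_mul]
    nlinarith [mul_nonpos_of_nonpos_of_nonneg hσ (sq_nonneg t)]
  · rw [← pow_le_pow_iff_left₀ ha (by positivity) two_ne_zero, mul_pow, Real.sq_sqrt hσ]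
    exact h

theorem le_div_sqrt_mul_of_sq_add_le {D D₀ a γ t : ℝ} (hD : 0 ≤ D) (hD₀ : 0 ≤ D₀) (ha : 0 < a)
    (hγ : 0 ≤ γ) (h₁ : D ≤ a * t) (h₂ : D ^ 2 + γ * t ^ 2 ≤ D₀ ^ 2) :
    D ≤ a / √(γ + a ^ 2) * D₀ := by
  have hpos : 0 < γ + a ^ 2 := by positivity
  have hsq : D ^ 2 ≤ a ^ 2 * t ^ 2 := by
    rw [← mul_pow]; exact pow_le_pow_left₀ hD h₁ 2
  rw [← pow_le_pow_iff_left₀ hD (by positivity) two_ne_zero, mul_pow, div_pow,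
    Real.sq_sqrt hpos.le, div_mul_eq_mul_div, le_div_iff₀ hpos]
  nlinarith [mul_le_mul_of_nonneg_left hsq hγ]

theorem tendsto_atTop_zero_of_add_le {Z e : ℕ → ℝ} (hZ : ∀ k, 0 ≤ Z k) (he : ∀ k, 0 ≤ e k)
    (h : ∀ k, Z (k + 1) + e k ≤ Z k) : Tendsto e atTop (𝓝 0) := by
  have hsum : ∀ n, ∑ i ∈ Finset.range n, e i ≤ Z 0 - Z n := by
    intro n
    induction n with
    | zero => simp
    | succ n ih => rw [Finset.sum_range_succ]; linarith [h n]
  exact Summable.tendsto_atTop_zero <|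
    summable_of_sum_range_le he fun n => (hsum n).trans (by linarith [hZ n])

theorem ConvexOn.finset_sum {E ι : Type*} [AddCommGroup E] [Module ℝ E] {s : Set E}
    (hs : Convex ℝ s) (t : Finset ι) {φ : ι → E → ℝ} (hφ : ∀ i ∈ t, ConvexOn ℝ s (φ i)) :
    ConvexOn ℝ s fun x => ∑ i ∈ t, φ i x := by
  classical
  induction t using Finset.induction_on with
  | empty => simpa using convexOn_const 0 hs
  | insert a t ha ih =>
    simp only [Finset.sum_insert ha]
    exact (hφ a (t.mem_insert_self a)).add (ih fun i hi => hφ i (Finset.mem_insert_of_mem hi))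

theorem le_mul_infDist {α : Type*} [PseudoMetricSpace α] {S : Set α} (hS : S.Nonempty)
    {x : α} {t C : ℝ} (hC : 0 ≤ C) (h : ∀ s ∈ S, t ≤ C * dist x s) : t ≤ C * infDist x S := by
  rcases hC.eq_or_lt with rfl | hC
  · obtain ⟨s, hs⟩ := hS
    simpa using h s hs
  · rw [← div_le_iff₀' hC, le_infDist hS]
    exact fun s hs => (div_le_iff₀' hC).2 (h s hs)

theorem le_infDist_sq {α : Type*} [PseudoMetricSpace α] {S : Set α} (hS : S.Nonempty)
    {x : α} {t : ℝ} (h : ∀ s ∈ S, t ≤ dist x s ^ 2) : t ≤ infDist x S ^ 2 := by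
  rcases le_or_gt t 0 with ht | ht
  · exact ht.trans (sq_nonneg _)
  · have : √t ≤ infDist x S :=
      (le_infDist hS).2 fun s hs => Real.sqrt_le_iff.2 ⟨dist_nonneg, h s hs⟩
    simpa [Real.sq_sqrt ht.le] using pow_le_pow_left₀ (Real.sqrt_nonneg t) this 2

theorem infDist_le_infDist_of_mapsTo {α β : Type*} [PseudoMetricSpace α] [PseudoMetricSpace β]
    {π : α → β} (hπ : ∀ a b, dist (π a) (π b) ≤ dist a b) {S : Set α} {T : Set β}
    (hST : MapsTo π S T) (hS : S.Nonempty) (z : α) : infDist (π z) T ≤ infDist z S :=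
  (le_infDist hS).2 fun s hs => (infDist_le_dist_of_mem (hST hs)).trans (hπ z s)

section InnerProductSpace

variable {E F : Type*} [NormedAddCommGroup E] [InnerProductSpace ℝ E]
  [NormedAddCommGroup F] [InnerProductSpace ℝ F]

theorem ConvexOn.subgradient_of_subgradient_add {Φ ψ : E → ℝ} (hΦ : ConvexOn ℝ univ Φ)
    {x₀ y : E} (hψ : ∀ η > 0, ∀ᶠ z in 𝓝 x₀, ψ z - ψ x₀ ≤ η * ‖z - x₀‖)
    (hsub : ∀ z, Φ x₀ + ψ x₀ + ⟪y, z - x₀⟫ ≤ Φ z + ψ z) (z : E) :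
    Φ x₀ + ⟪y, z - x₀⟫ ≤ Φ z := by
  set d := z - x₀ with hd
  have hline : Tendsto (fun t : ℝ => x₀ + t • d) (𝓝[>] 0) (𝓝 x₀) := by
    have : Continuous fun t : ℝ => x₀ + t • d := by fun_prop
    simpa using (this.tendsto 0).mono_left nhdsWithin_le_nhds
  refine le_of_forall_pos_le_add fun η hη => ?_
  obtain ⟨t, hψt, ht⟩ := ((hline.eventually (hψ (η / (‖d‖ + 1)) (by positivity))).and
    (Ioo_mem_nhdsGT one_pos)).exists
  have hconv : Φ (x₀ + t • d) ≤ (1 - t) * Φ x₀ + t * Φ z := by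
    have hcomb : x₀ + t • d = (1 - t) • x₀ + t • z := by rw [hd]; module
    rw [hcomb]
    exact hΦ.2 (mem_univ x₀) (mem_univ z) (sub_nonneg.2 ht.2.le) ht.1.le (by ring)
  have hstep := hsub (x₀ + t • d)
  rw [add_sub_cancel_left, inner_smul_right] at hstep
  rw [add_sub_cancel_left, norm_smul, Real.norm_of_nonneg ht.1.le] at hψt
  have hslack : η / (‖d‖ + 1) * (t * ‖d‖) ≤ t * η := by
    rw [div_mul_eq_mul_div, div_le_iff₀ (by positivity)]
    nlinarith [norm_nonneg d, ht.1]
  have : t * ⟪y, d⟫ ≤ t * (Φ z - Φ x₀ + η) := by linarith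
  linarith [le_of_mul_le_mul_left this ht.1]

theorem DifferentiableAt.eventually_norm_sub_sq_le {φ : E → F} {x₀ : E}
    (hφ : DifferentiableAt ℝ φ x₀) {η : ℝ} (hη : 0 < η) :
    ∀ᶠ z in 𝓝 x₀, ‖φ z - φ x₀‖ ^ 2 ≤ η * ‖z - x₀‖ := by
  obtain ⟨C, hC, hCφ⟩ := hφ.hasFDerivAt.isBigO_sub.exists_pos
  filter_upwards [hCφ.bound, ball_mem_nhds x₀ (by positivity : 0 < η / C ^ 2)] with z hz hball
  rw [mem_ball, dist_eq_norm, lt_div_iff₀ (by positivity)] at hball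
  calc ‖φ z - φ x₀‖ ^ 2 ≤ (C * ‖z - x₀‖) ^ 2 := pow_le_pow_left₀ (norm_nonneg _) hz 2
    _ = (‖z - x₀‖ * C ^ 2) * ‖z - x₀‖ := by ring
    _ ≤ η * ‖z - x₀‖ := by gcongr

theorem infDist_sq_add_le_of_eq_add_smul {S : Set E} (hS : S.Nonempty) {p q U : E} {c b : ℝ}
    (hc : 0 ≤ c) (hq : q = p + c • U) (hb : ∀ s ∈ S, -⟪p - s, U⟫ ≤ b * ‖U‖ ^ 2) :
    infDist p S ^ 2 + (c ^ 2 - 2 * c * b) * ‖U‖ ^ 2 ≤ infDist q S ^ 2 := by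
  refine le_infDist_sq hS fun s hs => ?_
  have hexpand : dist q s ^ 2 = ‖p - s‖ ^ 2 + 2 * c * ⟪p - s, U⟫ + c ^ 2 * ‖U‖ ^ 2 := by
    rw [dist_eq_norm, hq, show p + c • U - s = (p - s) + c • U by abel, norm_add_sq_real,
      inner_smul_right, norm_smul, mul_pow, Real.norm_eq_abs, sq_abs]
    ring
  have hp : infDist p S ^ 2 ≤ ‖p - s‖ ^ 2 := by
    rw [← dist_eq_norm]
    exact pow_le_pow_left₀ infDist_nonneg (infDist_le_dist_of_mem hs) 2
  nlinarith [hb s hs]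

theorem fejer_of_relative_error {w w' x x' y : E} {p q p' U : F} {c σ : ℝ} (hc : 0 < c)
    (hw : w' = w - c • y) (hq : q = p + c • U) (hmono : 0 ≤ ⟪x - x', y⟫ + ⟪p - p', U⟫)
    (herr : 2 / c * |⟪w - x, y⟫| + ‖y‖ ^ 2 ≤ σ * ‖U‖ ^ 2) :
    ‖w' - x'‖ ^ 2 + ‖p - p'‖ ^ 2 + (1 - σ) * c ^ 2 * ‖U‖ ^ 2 ≤ ‖w - x'‖ ^ 2 + ‖q - p'‖ ^ 2 := by
  have hw' : ‖w' - x'‖ ^ 2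
      = ‖w - x'‖ ^ 2 - 2 * c * (⟪w - x, y⟫ + ⟪x - x', y⟫) + c ^ 2 * ‖y‖ ^ 2 := by
    rw [hw, show w - c • y - x' = (w - x') - c • y by abel, norm_sub_sq_real, inner_smul_right,
      norm_smul, mul_pow, Real.norm_eq_abs, sq_abs, ← inner_add_left, sub_add_sub_cancel]
    ring
  have hq' : ‖q - p'‖ ^ 2 = ‖p - p'‖ ^ 2 + 2 * c * ⟪p - p', U⟫ + c ^ 2 * ‖U‖ ^ 2 := by
    rw [hq, show p + c • U - p' = (p - p') + c • U by abel, norm_add_sq_real,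
      inner_smul_right, norm_smul, mul_pow, Real.norm_eq_abs, sq_abs]
    ring
  have herr' : 2 * c * |⟪w - x, y⟫| ≤ c ^ 2 * (σ * ‖U‖ ^ 2 - ‖y‖ ^ 2) :=
    calc 2 * c * |⟪w - x, y⟫| = c ^ 2 * (2 / c * |⟪w - x, y⟫|) := by field_simp
      _ ≤ _ := by gcongr; linarith
  nlinarith [mul_le_mul_of_nonneg_left (neg_le_abs ⟪w - x, y⟫) (by positivity : 0 ≤ 2 * c),
    mul_nonneg hc.le hmono]

theorem inner_add_norm_sq_sub_inner_add_smul {l a b : E} (c : ℝ) :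
    (⟪l, a⟫ + c / 2 * ‖a‖ ^ 2 - ⟪l + c • b, a⟫) - (⟪l, b⟫ + c / 2 * ‖b‖ ^ 2 - ⟪l + c • b, b⟫)
      = c / 2 * ‖a - b‖ ^ 2 := by
  rw [norm_sub_sq_real, inner_add_left, inner_add_left, inner_smul_left, inner_smul_left,
    real_inner_self_eq_norm_sq, real_inner_comm b a]
  simp only [conj_trivial]
  ring

end InnerProductSpace

theorem Evec.inner_eq_sum {m : ℕ} (a b : Evec m) : ⟪a, b⟫ = ∑ i, a i * b i := by
  simp [PiLp.inner_apply, mul_comm]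

theorem Evec.inner_nonpos_of_nonneg_of_nonpos {m : ℕ} {a b : Evec m} (ha : ∀ i, 0 ≤ a i)
    (hb : ∀ i, b i ≤ 0) : ⟪a, b⟫ ≤ 0 := by
  rw [PiLp.inner_apply]
  exact Finset.sum_nonpos fun i _ => mul_nonpos_of_nonpos_of_nonneg (hb i) (ha i)

theorem norm_sq_max_zero_sub_inner_le {m : ℕ} {c : ℝ} (hc : 0 < c) (mu s s₀ : Evec m) :
    (1 / (2 * c) * ‖toE (fun i => max 0 (mu i + c * s i))‖ ^ 2
        - ⟪toE (fun i => max 0 (mu i + c * s₀ i)), s⟫)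
      - (1 / (2 * c) * ‖toE (fun i => max 0 (mu i + c * s₀ i))‖ ^ 2
        - ⟪toE (fun i => max 0 (mu i + c * s₀ i)), s₀⟫)
      ≤ c / 2 * ‖s - s₀‖ ^ 2 := by
  simp only [EuclideanSpace.real_norm_sq_eq, Evec.inner_eq_sum, toE, Finset.mul_sum,
    ← Finset.sum_sub_distrib]
  refine Finset.sum_le_sum fun i _ => ?_
  have key := sq_max_zero_sub_le (mu i + c * s₀ i) (mu i + c * s i)
  simp only [PiLp.sub_apply]
  rw [← sub_nonneg] at key ⊢
  have : 0 ≤ 1 / (2 * c) := by positivity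
  convert mul_nonneg this key using 1
  field_simp
  ring

section Lagrangian

variable {α : Type*} {f : α → ℝ} {h : α → Evec m1} {g : α → Evec m2}

theorem lag_sub_lag (x : α) (lam lam' : Evec m1) (mu mu' : Evec m2) :
    Lag f h g x lam' mu' - Lag f h g x lam mu = ⟪lam' - lam, h x⟫ + ⟪mu' - mu, g x⟫ := by
  simp only [Lag, inner_sub_left]
  ring

theorem lag_le_of_feasible {x : α} (lam : Evec m1) {mu : Evec m2} (hmu : ∀ i, 0 ≤ mu i)
    (hx : h x = 0) (hgx : ∀ i, g x i ≤ 0) : Lag f h g x lam mu ≤ f x := by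
  simp only [Lag, hx, inner_zero_right, add_zero]
  linarith [Evec.inner_nonpos_of_nonneg_of_nonpos hmu hgx]

theorem le_dualFun_iff {a : ℝ} {lam : Evec m1} {mu : Evec m2} :
    (a : EReal) ≤ dualFun f h g lam mu ↔ ∀ x, a ≤ Lag f h g x lam mu := by
  simp only [dualFun, le_iInf_iff, EReal.coe_le_coe_iff]

theorem augLag_sub_lag_le {c : ℝ} (hc : 0 < c) (lam : Evec m1) (mu : Evec m2) (x₀ z : α) :
    (AugLag f h g c z lam mu
        - Lag f h g z (lam + c • h x₀) (toE fun i => max 0 (mu i + c * g x₀ i)))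
      - (AugLag f h g c x₀ lam mu
        - Lag f h g x₀ (lam + c • h x₀) (toE fun i => max 0 (mu i + c * g x₀ i)))
      ≤ c / 2 * (‖h z - h x₀‖ ^ 2 + ‖g z - g x₀‖ ^ 2) := by
  have hh := inner_add_norm_sq_sub_inner_add_smul (l := lam) (a := h z) (b := h x₀) c
  have hg := norm_sq_max_zero_sub_inner_le hc mu (g z) (g x₀)
  simp only [AugLag, Lag, mul_sub] at hh hg ⊢
  linarith

theorem lag_le_sub_inner_of_augLag_update {c : ℝ} (hc : 0 < c) (lam lam' : Evec m1)
    (mu : Evec m2) {mu' : Evec m2} (hmu' : ∀ i, 0 ≤ mu' i) (x₀ : α) :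
    Lag f h g x₀ lam' mu' ≤ Lag f h g x₀ (lam + c • h x₀) (toE fun i => max 0 (mu i + c * g x₀ i))
      - ⟪-h x₀, lam' - (lam + c • h x₀)⟫
      - ⟪toE (fun i => min (mu i / c) (-g x₀ i)),
          mu' - toE fun i => max 0 (mu i + c * g x₀ i)⟫ := by
  have hcompl : ⟪mu' - toE (fun i => max 0 (mu i + c * g x₀ i)), g x₀⟫
      + ⟪toE (fun i => min (mu i / c) (-g x₀ i)), mu' - toE fun i => max 0 (mu i + c * g x₀ i)⟫
      ≤ 0 := by
    simp only [Evec.inner_eq_sum, ← Finset.sum_add_distrib]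
    refine Finset.sum_nonpos fun i _ => ?_
    have := sub_max_mul_add_min_nonpos hc (hmu' i) (mu i) (g x₀ i)
    simp only [toE, PiLp.sub_apply]
    linarith
  have := lag_sub_lag (f := f) (h := h) (g := g) x₀ (lam + c • h x₀) lam'
    (toE fun i => max 0 (mu i + c * g x₀ i)) mu'
  rw [inner_neg_left, real_inner_comm]
  linarith

end Lagrangian

section SaddlePoints

variable {E : Type*} [NormedAddCommGroup E] [InnerProductSpace ℝ E]
  {f : E → ℝ} {h : E → Evec m1} {g : E → Evec m2}

theorem saddleSubdiff.inner_nonneg {x x' y : E} {lam lam' u : Evec m1} {mu mu' v : Evec m2}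
    (h₁ : saddleSubdiff f h g x lam mu y u v) (h₂ : saddleSubdiff f h g x' lam' mu' 0 0 0)
    (hmu : ∀ i, 0 ≤ mu i) (hmu' : ∀ i, 0 ≤ mu' i) :
    0 ≤ ⟪x - x', y⟫ + ⟪mkDual lam mu - mkDual lam' mu', mkDual u v⟫ := by
  have hprimal := h₁.1 x'
  have hdual := h₁.2 lam' mu' hmu'
  have hprimal' := h₂.1 x
  have hdual' := h₂.2 lam mu hmu
  simp only [inner_zero_left, add_zero, sub_zero] at hprimal' hdual'
  rw [WithLp.prod_inner_apply]
  change 0 ≤ ⟪x - x', y⟫ + (⟪lam - lam', u⟫ + ⟪mu - mu', v⟫)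
  simp only [inner_sub_right, real_inner_comm y, real_inner_comm u, real_inner_comm v] at *
  linarith

theorem saddleSubdiff.feasible {x : E} {lam : Evec m1} {mu : Evec m2}
    (hs : saddleSubdiff f h g x lam mu 0 0 0) (hmu : ∀ i, 0 ≤ mu i) :
    h x = 0 ∧ (∀ i, g x i ≤ 0) ∧ ⟪mu, g x⟫ = 0 := by
  have hd : ∀ lam' mu', (∀ i, 0 ≤ mu' i) → ⟪lam' - lam, h x⟫ + ⟪mu' - mu, g x⟫ ≤ 0 := by
    intro lam' mu' hmu'
    have := hs.2 lam' mu' hmu'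
    simp only [inner_zero_left, sub_zero] at this
    linarith [lag_sub_lag (f := f) (h := h) (g := g) x lam lam' mu mu']
  have hg : ∀ i, g x i ≤ 0 := fun i => by
    have hmui : ∀ j, 0 ≤ (mu + EuclideanSpace.single i (1 : ℝ)) j := fun j => by
      by_cases hj : j = i <;> simp [hj, hmu, add_nonneg]
    simpa [EuclideanSpace.inner_single_left] using hd lam _ hmui
  refine ⟨real_inner_self_nonpos.1 (by simpa using hd (lam + h x) mu hmu), hg, ?_⟩
  exact le_antisymm (Evec.inner_nonpos_of_nonneg_of_nonpos hmu hg)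
    (by simpa using hd lam 0 fun _ => le_rfl)

theorem saddleSubdiff.le_lag {x : E} {lam : Evec m1} {mu : Evec m2}
    (hs : saddleSubdiff f h g x lam mu 0 0 0) (hmu : ∀ i, 0 ≤ mu i) (x' : E) :
    f x ≤ Lag f h g x' lam mu := by
  obtain ⟨hx, -, hcompl⟩ := hs.feasible hmu
  simpa [Lag, hx, hcompl] using hs.1 x'

theorem saddleSubdiff_of_mem_primalOpt (hsad : (SaddlePoints f h g).Nonempty) {x : E}
    (hx : x ∈ PrimalOpt f h g) {lam : Evec m1} {mu : Evec m2} (hmu : ∀ i, 0 ≤ mu i)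
    (hopt : ∀ (lam' : Evec m1) (mu' : Evec m2), (∀ i, 0 ≤ mu' i) →
      dualFun f h g lam' mu' ≤ dualFun f h g lam mu) :
    saddleSubdiff f h g x lam mu 0 0 0 := by
  obtain ⟨_, x₀, lam₀, mu₀, rfl, hmu₀, hs₀⟩ := hsad
  obtain ⟨hx₀, hgx₀, -⟩ := hs₀.feasible hmu₀
  have hle : ∀ x', f x ≤ Lag f h g x' lam mu := le_dualFun_iff.1 <|
    calc (f x : EReal) ≤ f x₀ := EReal.coe_le_coe_iff.2 (hx.2.2 x₀ hx₀ hgx₀)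
      _ ≤ dualFun f h g lam₀ mu₀ := le_dualFun_iff.2 (hs₀.le_lag hmu₀)
      _ ≤ dualFun f h g lam mu := hopt lam₀ mu₀ hmu₀
  refine ⟨fun x' => ?_, fun lam' mu' hmu' => ?_⟩
  · simpa using (lag_le_of_feasible lam hmu hx.1 hx.2.1).trans (hle x')
  · simpa using (lag_le_of_feasible lam' hmu' hx.1 hx.2.1).trans (hle x)

theorem saddlePoints_eq_prod (hsad : (SaddlePoints f h g).Nonempty) :
    SaddlePoints f h g = PrimalOpt f h g ×ˢ DualOpt f h g := by
  refine Subset.antisymm ?_ ?_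
  · rintro _ ⟨x, lam, mu, rfl, hmu, hs⟩
    obtain ⟨hx, hgx, -⟩ := hs.feasible hmu
    refine ⟨⟨hx, hgx, fun x' hx' hgx' => (hs.le_lag hmu x').trans
      (lag_le_of_feasible lam hmu hx' hgx')⟩, lam, mu, rfl, hmu, fun lam' mu' hmu' => ?_⟩
    have hdual := hs.2 lam' mu' hmu'
    simp only [inner_zero_left, sub_zero] at hdual
    calc dualFun f h g lam' mu' ≤ Lag f h g x lam' mu' := iInf_le _ x
      _ ≤ f x := EReal.coe_le_coe_iff.2 (hdual.trans (lag_le_of_feasible lam hmu hx hgx))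
      _ ≤ dualFun f h g lam mu := le_dualFun_iff.2 (hs.le_lag hmu)
  · rintro ⟨x, _⟩ ⟨hx, lam, mu, rfl, hmu, hopt⟩
    exact ⟨x, lam, mu, rfl, hmu, saddleSubdiff_of_mem_primalOpt hsad hx hmu hopt⟩

theorem dualOpt_nonempty (hsad : (SaddlePoints f h g).Nonempty) : (DualOpt f h g).Nonempty := by
  obtain ⟨s, hs⟩ := hsad
  exact ⟨s.2, (saddlePoints_eq_prod ⟨s, hs⟩ ▸ hs).2⟩

theorem convexOn_lag (hf : ConvexOn ℝ univ f) (hh : ∃ A : E →ᵃ[ℝ] Evec m1, ∀ z, h z = A z)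
    (hg : ∀ i, ConvexOn ℝ univ fun z => g z i) (lam : Evec m1) {mu : Evec m2}
    (hmu : ∀ i, 0 ≤ mu i) : ConvexOn ℝ univ fun x => Lag f h g x lam mu := by
  obtain ⟨A, hA⟩ := hh
  have hlam : ConvexOn ℝ univ fun x => ⟪lam, h x⟫ := by
    simpa [hA, Function.comp_def] using
      ((innerSL ℝ lam).toLinearMap.convexOn convex_univ).comp_affineMap A
  have hmu' : ConvexOn ℝ univ fun x => ⟪mu, g x⟫ := by
    simpa only [Evec.inner_eq_sum, smul_eq_mul] using
      ConvexOn.finset_sum convex_univ Finset.univ fun i _ => (hg i).smul (hmu i)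
  exact (hf.add hlam).add hmu'

theorem saddleSubdiff_of_augLag_subgradient [FiniteDimensional ℝ E] (hf : ConvexOn ℝ univ f)
    (hh : ∃ A : E →ᵃ[ℝ] Evec m1, ∀ z, h z = A z) (hg₁ : ∀ i, ConvexOn ℝ univ fun z => g z i)
    (hg₂ : ∀ i, ContDiff ℝ 1 fun z => g z i) {c : ℝ} (hc : 0 < c) (lam : Evec m1)
    (mu : Evec m2) {x₀ y : E}
    (hsub : ∀ z, AugLag f h g c x₀ lam mu + ⟪y, z - x₀⟫ ≤ AugLag f h g c z lam mu) :
    saddleSubdiff f h g x₀ (lam + c • h x₀) (toE fun i => max 0 (mu i + c * g x₀ i)) y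
      (-h x₀) (toE fun i => min (mu i / c) (-g x₀ i)) := by
  have hdh : DifferentiableAt ℝ h x₀ := by
    obtain ⟨A, hA⟩ := hh
    rw [show h = A from funext hA]
    exact (⟨A, A.continuous_of_finiteDimensional⟩ : E →ᴬ[ℝ] Evec m1).differentiableAt
  have hdg : DifferentiableAt ℝ g x₀ :=
    ((contDiff_piLp 2).2 hg₂).differentiable one_ne_zero x₀
  -- `AugLag - Lag` at the updated multipliers is flat to first order at `x₀`, so `y` is also a
  -- subgradient of the (convex) Lagrangian there.
  refine ⟨(convexOn_lag hf hh hg₁ _ fun i => le_max_left _ _).subgradient_of_subgradient_add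
    (ψ := fun z => AugLag f h g c z lam mu
      - Lag f h g z (lam + c • h x₀) (toE fun i => max 0 (mu i + c * g x₀ i)))
    (fun η hη => ?_) (fun z => by linarith [hsub z]),
    fun lam' mu' hmu' => lag_le_sub_inner_of_augLag_update hc lam lam' mu hmu' x₀⟩
  filter_upwards [hdh.eventually_norm_sub_sq_le (div_pos hη hc),
    hdg.eventually_norm_sub_sq_le (div_pos hη hc)] with z hz₁ hz₂
  calc _ ≤ c / 2 * (‖h z - h x₀‖ ^ 2 + ‖g z - g x₀‖ ^ 2) := augLag_sub_lag_le hc lam mu x₀ z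
    _ ≤ c / 2 * (η / c * ‖z - x₀‖ + η / c * ‖z - x₀‖) := by gcongr
    _ = η * ‖z - x₀‖ := by field_simp; ring

def ErrorBound (f : E → ℝ) (h : E → Evec m1) (g : E → Evec m2) (κ ε : ℝ) : Prop :=
  ∀ (z : E) (lam' : Evec m1) (mu' : Evec m2) (y' : E) (u' : Evec m1) (v' : Evec m2),
    (∀ i, 0 ≤ mu' i) → saddleSubdiff f h g z lam' mu' y' u' v' →
    ‖asT (y', mkDual u' v')‖ ≤ ε →
    infDist (asT (z, mkDual lam' mu')) (asT '' SaddlePoints f h g) ≤ κ * ‖asT (y', mkDual u' v')‖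

theorem ErrorBound.dual_bounds {κ ε σ : ℝ} (heb : ErrorBound f h g κ ε)
    (hsad : (SaddlePoints f h g).Nonempty) (hκ : 0 ≤ κ) (hε : 0 ≤ ε) (hσ : 0 ≤ σ)
    {x y : E} {lam u : Evec m1} {mu v : Evec m2} (hmu : ∀ i, 0 ≤ mu i)
    (hs : saddleSubdiff f h g x lam mu y u v) (hy : ‖y‖ ^ 2 ≤ σ * ‖mkDual u v‖ ^ 2)
    (hsmall : ‖mkDual u v‖ ^ 2 ≤ ε ^ 2 / (1 + σ)) :
    infDist (mkDual lam mu) (DualOpt f h g) ≤ κ * √(1 + σ) * ‖mkDual u v‖ ∧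
      ∀ p' ∈ DualOpt f h g,
        -⟪mkDual lam mu - p', mkDual u v⟫ ≤ κ * (σ + √σ) * ‖mkDual u v‖ ^ 2 := by
  set U := mkDual u v
  have hr : ‖asT (y, U)‖ ≤ √(1 + σ) * ‖U‖ := by
    refine le_sqrt_mul_of_sq_le_mul_sq (norm_nonneg _) (norm_nonneg _) ?_
    rw [WithLp.prod_norm_sq_eq_of_L2]
    change ‖y‖ ^ 2 + ‖U‖ ^ 2 ≤ _
    linarith
  have hrε : ‖asT (y, U)‖ ≤ ε := by
    refine hr.trans ((pow_le_pow_iff_left₀ (by positivity) hε two_ne_zero).1 ?_)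
    rwa [mul_pow, Real.sq_sqrt (by linarith), ← le_div_iff₀' (by linarith)]
  have hEB := (heb x lam mu y u v hmu hs hrε).trans (mul_le_mul_of_nonneg_left hr hκ)
  have hne : (asT '' (PrimalOpt f h g ×ˢ DualOpt f h g)).Nonempty :=
    (saddlePoints_eq_prod hsad ▸ hsad).image asT
  rw [saddlePoints_eq_prod hsad] at hEB
  have hX : infDist x (PrimalOpt f h g) ≤ κ * (√(1 + σ) * ‖U‖) :=
    (infDist_le_infDist_of_mapsTo (π := fun t : Triple E m1 m2 => t.fst) WithLp.dist_fst_le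
      (by rintro _ ⟨s, hs, rfl⟩; exact hs.1) hne (asT (x, mkDual lam mu))).trans hEB
  have hP : infDist (mkDual lam mu) (DualOpt f h g) ≤ κ * (√(1 + σ) * ‖U‖) :=
    (infDist_le_infDist_of_mapsTo (π := fun t : Triple E m1 m2 => t.snd) WithLp.dist_snd_le
      (by rintro _ ⟨s, hs, rfl⟩; exact hs.2) hne (asT (x, mkDual lam mu))).trans hEB
  refine ⟨by rwa [mul_assoc], fun p' hp' => ?_⟩
  obtain ⟨lam', mu', rfl, hmu', hopt⟩ := hp'
  have hy' : ‖y‖ ≤ √σ * ‖U‖ := le_sqrt_mul_of_sq_le_mul_sq (norm_nonneg _) (norm_nonneg _) hy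
  have key : -⟪mkDual lam mu - mkDual lam' mu', U⟫ ≤ √σ * ‖U‖ * infDist x (PrimalOpt f h g) := by
    refine le_mul_infDist hne.of_image.fst (by positivity) fun x' hx' => ?_
    have hmono := hs.inner_nonneg (saddleSubdiff_of_mem_primalOpt hsad hx' hmu' hopt) hmu hmu'
    have hcs : ⟪x - x', y⟫ ≤ dist x x' * (√σ * ‖U‖) := by
      rw [dist_eq_norm]
      exact (real_inner_le_norm _ _).trans (by gcongr)
    linarith
  calc -⟪mkDual lam mu - mkDual lam' mu', U⟫ ≤ √σ * ‖U‖ * (κ * (√(1 + σ) * ‖U‖)) := by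
        refine key.trans ?_
        gcongr
    _ = κ * (√σ * √(1 + σ)) * ‖U‖ ^ 2 := by ring
    _ ≤ κ * (σ + √σ) * ‖U‖ ^ 2 := by gcongr; exact sqrt_mul_sqrt_one_add_le hσ

end SaddlePoints

/-- The paper's `u^k = (p^{k-1} - p^k) / c_k`, in closed form (see `ALMSeq.dual_update`). -/
def almResidual {α : Type*} (h : α → Evec m1) (g : α → Evec m2) (c : ℕ → ℝ) (x : ℕ → α)
    (mu : ℕ → Evec m2) (k : ℕ) : DualPair m1 m2 :=
  mkDual (-h (x k)) (toE fun i => min (mu (k - 1) i / c k) (-g (x k) i))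

namespace ALMSeq

variable {E : Type*} [NormedAddCommGroup E] [InnerProductSpace ℝ E]
  {f : E → ℝ} {h : E → Evec m1} {g : E → Evec m2} {σ : ℝ} {c : ℕ → ℝ} {x y w : ℕ → E}
  {lam : ℕ → Evec m1} {mu : ℕ → Evec m2}

theorem mu_nonneg (halg : ALMSeq f h g σ c x y w lam mu) (k : ℕ) : ∀ i, 0 ≤ mu k i := by
  rcases k with _ | k
  · exact halg.mu0_nonneg
  · simp [halg.mu_update (k + 1) k.succ_pos, toE]

theorem dual_update (halg : ALMSeq f h g σ c x y w lam mu) {k : ℕ} (hk : 1 ≤ k) :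
    mkDual (lam (k - 1)) (mu (k - 1)) = mkDual (lam k) (mu k) + c k • almResidual h g c x mu k := by
  have hlam : lam (k - 1) = lam k + c k • -h (x k) := by
    rw [halg.lam_update k hk, smul_neg]; abel
  have hmu : mu (k - 1) = mu k + c k • toE fun i => min (mu (k - 1) i / c k) (-g (x k) i) := by
    ext i
    simp [halg.mu_update k hk, toE, max_zero_add_mul_min_div (halg.c_pos k)]
  rw [hlam, hmu]
  rfl

theorem relative_error (halg : ALMSeq f h g σ c x y w lam mu) {k : ℕ} (hk : 1 ≤ k) :
    2 / c k * |⟪w (k - 1) - x k, y k⟫| + ‖y k‖ ^ 2 ≤ σ * ‖almResidual h g c x mu k‖ ^ 2 := by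
  rw [almResidual, mkDual, WithLp.prod_norm_sq_eq_of_L2]
  simpa using halg.err k hk

theorem norm_sq_subgrad_le (halg : ALMSeq f h g σ c x y w lam mu) {k : ℕ} (hk : 1 ≤ k) :
    ‖y k‖ ^ 2 ≤ σ * ‖almResidual h g c x mu k‖ ^ 2 := by
  have : 0 ≤ 2 / c k * |⟪w (k - 1) - x k, y k⟫| := by have := halg.c_pos k; positivity
  linarith [halg.relative_error hk]

theorem saddleSubdiff_iterate [FiniteDimensional ℝ E] (halg : ALMSeq f h g σ c x y w lam mu)
    (hf : ConvexOn ℝ univ f) (hh : ∃ A : E →ᵃ[ℝ] Evec m1, ∀ z, h z = A z)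
    (hg₁ : ∀ i, ConvexOn ℝ univ fun z => g z i) (hg₂ : ∀ i, ContDiff ℝ 1 fun z => g z i)
    {k : ℕ} (hk : 1 ≤ k) :
    saddleSubdiff f h g (x k) (lam k) (mu k) (y k) (-h (x k))
      (toE fun i => min (mu (k - 1) i / c k) (-g (x k) i)) := by
  rw [halg.lam_update k hk, halg.mu_update k hk]
  exact saddleSubdiff_of_augLag_subgradient hf hh hg₁ hg₂ (halg.c_pos k) _ _ (halg.subgrad k hk)

theorem fejer_step [FiniteDimensional ℝ E] (halg : ALMSeq f h g σ c x y w lam mu)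
    (hf : ConvexOn ℝ univ f) (hh : ∃ A : E →ᵃ[ℝ] Evec m1, ∀ z, h z = A z)
    (hg₁ : ∀ i, ConvexOn ℝ univ fun z => g z i) (hg₂ : ∀ i, ContDiff ℝ 1 fun z => g z i)
    {x' : E} {lam' : Evec m1} {mu' : Evec m2} (hs' : saddleSubdiff f h g x' lam' mu' 0 0 0)
    (hmu' : ∀ i, 0 ≤ mu' i) {k : ℕ} (hk : 1 ≤ k) :
    ‖w k - x'‖ ^ 2 + ‖mkDual (lam k) (mu k) - mkDual lam' mu'‖ ^ 2
        + (1 - σ) * c k ^ 2 * ‖almResidual h g c x mu k‖ ^ 2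
      ≤ ‖w (k - 1) - x'‖ ^ 2 + ‖mkDual (lam (k - 1)) (mu (k - 1)) - mkDual lam' mu'‖ ^ 2 :=
  fejer_of_relative_error (halg.c_pos k) (halg.w_update k hk) (halg.dual_update hk)
    ((halg.saddleSubdiff_iterate hf hh hg₁ hg₂ hk).inner_nonneg hs' (halg.mu_nonneg k) hmu')
    (halg.relative_error hk)

theorem tendsto_norm_sq_almResidual [FiniteDimensional ℝ E]
    (halg : ALMSeq f h g σ c x y w lam mu)
    (hf : ConvexOn ℝ univ f) (hh : ∃ A : E →ᵃ[ℝ] Evec m1, ∀ z, h z = A z)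
    (hg₁ : ∀ i, ConvexOn ℝ univ fun z => g z i) (hg₂ : ∀ i, ContDiff ℝ 1 fun z => g z i)
    (hsad : (SaddlePoints f h g).Nonempty) :
    Tendsto (fun k => ‖almResidual h g c x mu k‖ ^ 2) atTop (𝓝 0) := by
  obtain ⟨_, x', lam', mu', rfl, hmu', hs'⟩ := hsad
  obtain ⟨C, hC, hCle⟩ : ∃ C > 0, ∀ k, C ≤ (1 - σ) * c k ^ 2 := by
    obtain ⟨cmin, hcmin, hcle⟩ := halg.c_inf
    have hσ := sub_pos.2 halg.sigma_lt_one
    exact ⟨(1 - σ) * cmin ^ 2, by positivity, fun k => by gcongr; exact hcle k⟩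
  have hdecr := tendsto_atTop_zero_of_add_le
    (Z := fun k => ‖w k - x'‖ ^ 2 + ‖mkDual (lam k) (mu k) - mkDual lam' mu'‖ ^ 2)
    (e := fun k => C * ‖almResidual h g c x mu (k + 1)‖ ^ 2) (fun k => by positivity)
    (fun k => by positivity) fun k => by
      have := halg.fejer_step hf hh hg₁ hg₂ hs' hmu' (Nat.le_add_left 1 k)
      rw [Nat.add_sub_cancel] at this
      nlinarith [mul_le_mul_of_nonneg_right (hCle (k + 1))
        (sq_nonneg ‖almResidual h g c x mu (k + 1)‖)]
  rw [← tendsto_add_atTop_iff_nat 1]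
  simpa [hC.ne'] using hdecr.const_mul C⁻¹

theorem infDist_dualOpt_le [FiniteDimensional ℝ E] (halg : ALMSeq f h g σ c x y w lam mu)
    (hf : ConvexOn ℝ univ f) (hh : ∃ A : E →ᵃ[ℝ] Evec m1, ∀ z, h z = A z)
    (hg₁ : ∀ i, ConvexOn ℝ univ fun z => g z i) (hg₂ : ∀ i, ContDiff ℝ 1 fun z => g z i)
    (hsad : (SaddlePoints f h g).Nonempty) {κ ε : ℝ} (heb : ErrorBound f h g κ ε) (hκ : 0 < κ)
    (hε : 0 ≤ ε) {k : ℕ} (hk : 1 ≤ k) (hsmall : ‖almResidual h g c x mu k‖ ^ 2 ≤ ε ^ 2 / (1 + σ))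
    (hck : 2 * κ * (σ + √σ) ≤ c k) :
    infDist (mkDual (lam k) (mu k)) (DualOpt f h g) ≤
      κ * √(1 + σ) / √(c k ^ 2 - 2 * κ * (σ + √σ) * c k + κ ^ 2 * (1 + σ)) *
        infDist (mkDual (lam (k - 1)) (mu (k - 1))) (DualOpt f h g) := by
  have hσ := halg.sigma_nonneg
  obtain ⟨hD, hb⟩ := heb.dual_bounds hsad hκ.le hε hσ (halg.mu_nonneg k)
    (halg.saddleSubdiff_iterate hf hh hg₁ hg₂ hk) (halg.norm_sq_subgrad_le hk) hsmall
  have hstep := infDist_sq_add_le_of_eq_add_smul (dualOpt_nonempty hsad) (halg.c_pos k).le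
    (halg.dual_update hk) hb
  have hγ : 0 ≤ c k ^ 2 - 2 * c k * (κ * (σ + √σ)) := by nlinarith [halg.c_pos k]
  convert le_div_sqrt_mul_of_sq_add_le infDist_nonneg infDist_nonneg (by positivity) hγ hD hstep
    using 4
  rw [mul_pow, Real.sq_sqrt (by linarith)]
  ring

end ALMSeq

theorem eckstein_silva_alm_dual_Q_linear_rate {f : X → ℝ} {h : X → Evec m1} {g : X → Evec m2}
    (hf : ConvexOn ℝ Set.univ f)
    (hh : ∃ A : X →ᵃ[ℝ] Evec m1, ∀ z, h z = A z)
    (hg1 : ∀ i, ConvexOn ℝ Set.univ (fun z => g z i))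
    (hg2 : ∀ i, ContDiff ℝ 1 (fun z => g z i))
    {σ : ℝ} {c : ℕ → ℝ} {x y w : ℕ → X} {lam : ℕ → Evec m1} {mu : ℕ → Evec m2}
    (halg : ALMSeq f h g σ c x y w lam mu)
    (hsad : (SaddlePoints f h g).Nonempty)
    {κ ε : ℝ} (hκ : 0 < κ) (hε : 0 < ε)
    (heb : ∀ (z : X) (lam' : Evec m1) (mu' : Evec m2) (y' : X) (u' : Evec m1) (v' : Evec m2),
      (∀ i, 0 ≤ mu' i) → saddleSubdiff f h g z lam' mu' y' u' v' →
      ‖asT (y', mkDual u' v')‖ ≤ ε →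
      Metric.infDist (asT (z, mkDual lam' mu')) (asT '' SaddlePoints f h g) ≤
        κ * ‖asT (y', mkDual u' v')‖)
    -- `liminf c k > 2 κ (σ + √σ)`, phrased without `Filter.liminf` junk values:
    (hliminf : ∃ δ > 0, ∀ᶠ k in atTop, 2 * κ * (σ + Real.sqrt σ) + δ ≤ c k)
 :
    ∃ k1 : ℕ, 0 < k1 ∧ ∀ k, k1 ≤ k →
      Metric.infDist (mkDual (lam k) (mu k)) (DualOpt f h g) ≤
        (κ * Real.sqrt (1 + σ) /
          Real.sqrt ((c k) ^ 2 - 2 * κ * (σ + Real.sqrt σ) * c k + κ ^ 2 * (1 + σ))) *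
        Metric.infDist (mkDual (lam (k - 1)) (mu (k - 1))) (DualOpt f h g) := by
  obtain ⟨δ, hδ, hc⟩ := hliminf
  have hsmall := (halg.tendsto_norm_sq_almResidual hf hh hg1 hg2 hsad).eventually
    (ge_mem_nhds (by have := halg.sigma_nonneg; positivity : (0 : ℝ) < ε ^ 2 / (1 + σ)))
  obtain ⟨N, hN⟩ := eventually_atTop.1 (hc.and hsmall)
  refine ⟨N + 1, N.succ_pos, fun k hk => ?_⟩
  obtain ⟨hck, hUk⟩ := hN k (by omega)
  exact halg.infDist_dualOpt_le hf hh hg1 hg2 hsad heb hκ hε.le (by omega) hUk (by linarith)
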